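/- arXiv:2403.11391 — 7 statements merged into one kernel-verified Lean document; each statement's English description precedes it below -/
import Mathlib

section
/- Let W = W₂W₁ be a fixed product of two matrices W₁ ∈ ℝ^{p×d} and W₂ ∈ ℝ^{p×p}. Among all factorizations W = W₂W₁, the norm ‖W₁ᵀW₁‖_F² + ‖W₂ᵀW₂‖_F² is minimized if and only if W₁W₁ᵀ = W₂ᵀW₂. -/
open Matrix

/-!
Expanding the square of `W₁W₁ᵀ - W₂ᵀW₂` and using the cyclicity of the trace gives
`‖W₁ᵀW₁‖² + ‖W₂ᵀW₂‖² = ‖W₁W₁ᵀ - W₂ᵀW₂‖² + 2‖W₂W₁‖²`, whose last term only depends on `W`.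
Hence the balanced factorizations are exactly the minimizers, provided one exists; one is
`B = (WWᵀ)^{1/4}`, `A = (WWᵀ)^{-1/4} W`, built with the functional calculus of `WWᵀ`.
-/

theorem Real.sqrt_sqrt_pow_four {x : ℝ} (hx : 0 ≤ x) : √√x ^ 4 = x := by
  rw [show 4 = 2 * 2 from rfl, pow_mul, Real.sq_sqrt (Real.sqrt_nonneg x), Real.sq_sqrt hx]

namespace Matrix

variable {l m n : Type*} [Fintype l] [Fintype m] [Fintype n]

theorem trace_transpose_mul_self_nonneg (X : Matrix m n ℝ) : 0 ≤ trace (Xᵀ * X) := by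
  simpa using (posSemidef_conjTranspose_mul_self X).trace_nonneg

theorem trace_transpose_mul_self_eq_zero_iff {X : Matrix m n ℝ} : trace (Xᵀ * X) = 0 ↔ X = 0 := by
  simpa using trace_conjTranspose_mul_self_eq_zero_iff (A := X)

theorem trace_gram_sq_add_trace_gram_sq {R : Type*} [CommRing R] (A : Matrix m n R)
    (B : Matrix l m R) :
    trace ((Aᵀ * A)ᵀ * (Aᵀ * A)) + trace ((Bᵀ * B)ᵀ * (Bᵀ * B)) =
      trace ((A * Aᵀ - Bᵀ * B)ᵀ * (A * Aᵀ - Bᵀ * B)) + 2 * trace ((B * A)ᵀ * (B * A)) := by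
  have hA : trace (Aᵀ * A * (Aᵀ * A)) = trace (A * Aᵀ * (A * Aᵀ)) := by
    rw [← Matrix.mul_assoc, trace_mul_comm]; simp only [Matrix.mul_assoc]
  have hAB : trace (Aᵀ * Bᵀ * (B * A)) = trace (A * Aᵀ * (Bᵀ * B)) := by
    rw [← Matrix.mul_assoc, trace_mul_comm]; simp only [Matrix.mul_assoc]
  have hBA : trace (Bᵀ * B * (A * Aᵀ)) = trace (A * Aᵀ * (Bᵀ * B)) := trace_mul_comm _ _
  simp only [transpose_mul, transpose_transpose, transpose_sub, Matrix.mul_sub, Matrix.sub_mul,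
    trace_sub, hA, hBA, hAB]
  ring

variable [DecidableEq m]

theorem transpose_cfc (f : ℝ → ℝ) (H : Matrix m m ℝ) : (cfc f H)ᵀ = cfc f H := by
  rw [← conjTranspose_eq_transpose_of_trivial]
  exact (cfc_predicate f H).star_eq

theorem cfc_mul_id_mul (f g : ℝ → ℝ) {H : Matrix m m ℝ} (hH : IsSelfAdjoint H) :
    cfc (fun x => f x * x * g x) H = cfc f H * H * cfc g H := by
  have hcont (k : ℝ → ℝ) : ContinuousOn k (spectrum ℝ H) := H.finite_spectrum.continuousOn k
  rw [cfc_mul _ _ H (hcont _) (hcont _), cfc_mul _ _ H (hcont _) (hcont _), cfc_id' ℝ H hH]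

theorem exists_balanced_factorization (W : Matrix m n ℝ) :
    ∃ (A : Matrix m n ℝ) (B : Matrix m m ℝ), B * A = W ∧ A * Aᵀ = Bᵀ * B := by
  have hH : (W * Wᵀ).PosSemidef := by simpa using posSemidef_self_mul_conjTranspose W
  have hsa : IsSelfAdjoint (W * Wᵀ) := hH.isHermitian
  have hspec : spectrum ℝ (W * Wᵀ) ⊆ {x | 0 ≤ x} :=
    (posSemidef_iff_isHermitian_and_spectrum_nonneg.mp hH).2
  have hcont (k : ℝ → ℝ) : ContinuousOn k (spectrum ℝ (W * Wᵀ)) :=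
    (W * Wᵀ).finite_spectrum.continuousOn k
  -- `b⁻¹` uses `0⁻¹ = 0`, so `cfc b⁻¹ (W * Wᵀ)` is the pseudo-inverse of `(W * Wᵀ)^{1/4}`.
  set b : ℝ → ℝ := fun x => √√x
  refine ⟨cfc b⁻¹ (W * Wᵀ) * W, cfc b (W * Wᵀ), ?_, ?_⟩
  · -- `cfc q (W * Wᵀ)` is the projection onto the kernel of `W * Wᵀ`, which is that of `Wᵀ`.
    set q : ℝ → ℝ := fun x => 1 - b x * (b x)⁻¹
    have hQ : cfc q (W * Wᵀ) = 1 - cfc b (W * Wᵀ) * cfc b⁻¹ (W * Wᵀ) := by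
      rw [cfc_sub _ _ _ (hcont _) (hcont _), cfc_const_one ℝ _ hsa,
        cfc_mul _ _ _ (hcont _) (hcont _)]
      rfl
    have hQH : cfc q (W * Wᵀ) * (W * Wᵀ) * cfc q (W * Wᵀ) = 0 := by
      rw [← cfc_mul_id_mul _ _ hsa, ← cfc_zero ℝ (W * Wᵀ)]
      refine cfc_congr fun x hx => ?_
      have hx4 := Real.sqrt_sqrt_pow_four (hspec hx)
      simp only [q, b, Pi.zero_apply]
      generalize √√x = s at hx4
      subst hx4
      rcases eq_or_ne s 0 with hs | hs <;> simp [hs]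
    have hQW : cfc q (W * Wᵀ) * W = 0 := by
      rw [← self_mul_conjTranspose_eq_zero, conjTranspose_eq_transpose_of_trivial, transpose_mul,
        transpose_cfc, ← hQH]
      simp only [Matrix.mul_assoc]
    calc cfc b (W * Wᵀ) * (cfc b⁻¹ (W * Wᵀ) * W) = (1 - cfc q (W * Wᵀ)) * W := by
          rw [hQ, sub_sub_cancel, Matrix.mul_assoc]
      _ = W := by rw [Matrix.sub_mul, hQW, Matrix.one_mul, sub_zero]
  · rw [transpose_mul, transpose_cfc, transpose_cfc, ← Matrix.mul_assoc, Matrix.mul_assoc _ W,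
      ← cfc_mul_id_mul _ _ hsa, ← cfc_mul _ _ _ (hcont _) (hcont _)]
    refine cfc_congr fun x hx => ?_
    have hx4 := Real.sqrt_sqrt_pow_four (hspec hx)
    simp only [b, Pi.inv_apply]
    generalize √√x = s at hx4
    subst hx4
    rcases eq_or_ne s 0 with hs | hs
    · simp [hs]
    · field_simp

end Matrix

/-- Among all factorizations `W = W₂ * W₁`, the norm
`‖W₁ᵀW₁‖_F² + ‖W₂ᵀW₂‖_F²` is minimized iff `W₁W₁ᵀ = W₂ᵀW₂`. -/
theorem min_norm_factorization_iff_balanced {p d : ℕ}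
    (W : Matrix (Fin p) (Fin d) ℝ)
    (W₁ : Matrix (Fin p) (Fin d) ℝ) (W₂ : Matrix (Fin p) (Fin p) ℝ)
    (hW : W₂ * W₁ = W) :
    (∀ (A : Matrix (Fin p) (Fin d) ℝ) (B : Matrix (Fin p) (Fin p) ℝ), B * A = W →
      trace ((W₁ᵀ * W₁)ᵀ * (W₁ᵀ * W₁)) + trace ((W₂ᵀ * W₂)ᵀ * (W₂ᵀ * W₂)) ≤
        trace ((Aᵀ * A)ᵀ * (Aᵀ * A)) + trace ((Bᵀ * B)ᵀ * (Bᵀ * B))) ↔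
    W₁ * W₁ᵀ = W₂ᵀ * W₂ := by
  have hnorm (A : Matrix (Fin p) (Fin d) ℝ) (B : Matrix (Fin p) (Fin p) ℝ) (hBA : B * A = W) :
      trace ((Aᵀ * A)ᵀ * (Aᵀ * A)) + trace ((Bᵀ * B)ᵀ * (Bᵀ * B)) =
        trace ((A * Aᵀ - Bᵀ * B)ᵀ * (A * Aᵀ - Bᵀ * B)) + 2 * trace (Wᵀ * W) := by
    rw [trace_gram_sq_add_trace_gram_sq, hBA]
  constructor
  · intro hmin
    obtain ⟨A, B, hBA, hbal⟩ := exists_balanced_factorization W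
    have h := hmin A B hBA
    rw [hnorm W₁ W₂ hW, hnorm A B hBA, hbal, sub_self, transpose_zero, Matrix.zero_mul,
      trace_zero] at h
    exact sub_eq_zero.mp <| trace_transpose_mul_self_eq_zero_iff.mp <|
      le_antisymm (by linarith) (trace_transpose_mul_self_nonneg _)
  · intro hbal A B hBA
    rw [hnorm W₁ W₂ hW, hnorm A B hBA, hbal, sub_self, transpose_zero, Matrix.zero_mul, trace_zero]
    linarith [trace_transpose_mul_self_nonneg (A * Aᵀ - Bᵀ * B)]
end

section
/- Consider a two-layer linear model f(x) = W₂(t)W₁(t)x trained by gradient flow on any differentiable loss L(W₂W₁), i.e., dW_i/dt = −∂L/∂W_i for i = 1, 2. If the initialization satisfies W₁(0)W₁(0)ᵀ = W₂(0)ᵀW₂(0), then for all t ≥ 0, W₁(t)W₁(t)ᵀ = W₂(t)ᵀW₂(t). -/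
/-!
Along the flow both `W₁ W₁ᵀ` and `W₂ᵀ W₂` have derivative `-(W₂ᵀ G W₁ᵀ + W₁ Gᵀ W₂)`, so their
difference is constant in time and vanishes because it vanishes at `t = 0`.
-/

open Matrix

theorem eq_of_hasDerivAt_eq {E : Type*} [NormedAddCommGroup E] [NormedSpace ℝ E]
    {f g f' : ℝ → E} (hf : ∀ x, HasDerivAt f (f' x) x) (hg : ∀ x, HasDerivAt g (f' x) x)
    {x₀ : ℝ} (h₀ : f x₀ = g x₀) : f = g := by
  have hconst : ∀ x y, (f - g) x = (f - g) y :=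
    is_const_of_deriv_eq_zero (fun x => ((hf x).sub (hg x)).differentiableAt)
      fun x => by simpa using ((hf x).sub (hg x)).deriv
  funext x
  simpa [sub_eq_zero, h₀] using hconst x x₀

theorem hasDerivAt_matrix_mul_apply {m n o : Type*} [Fintype n]
    {A : ℝ → Matrix m n ℝ} {B : ℝ → Matrix n o ℝ} {A' : Matrix m n ℝ} {B' : Matrix n o ℝ}
    {t : ℝ} {i : m} {j : o}
    (hA : ∀ k, HasDerivAt (fun s => A s i k) (A' i k) t)
    (hB : ∀ k, HasDerivAt (fun s => B s k j) (B' k j) t) :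
    HasDerivAt (fun s => (A s * B s) i j) ((A' * B t + A t * B') i j) t := by
  simp only [mul_apply, Matrix.add_apply, ← Finset.sum_add_distrib]
  exact HasDerivAt.fun_sum fun k _ => (hA k).fun_mul (hB k)

theorem balancedness_deriv_eq {R p q d : Type*} [CommRing R] [Fintype p] [Fintype q] [Fintype d]
    (W₁ : Matrix p d R) (W₂ : Matrix q p R) (G : Matrix q d R) :
    -(W₂ᵀ * G) * W₁ᵀ + W₁ * (-(W₂ᵀ * G))ᵀ = (-(G * W₁ᵀ))ᵀ * W₂ + W₂ᵀ * -(G * W₁ᵀ) := by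
  simp only [transpose_neg, transpose_mul, transpose_transpose, Matrix.neg_mul, Matrix.mul_neg,
    Matrix.mul_assoc]
  abel

/-- Gradient flow on a two-layer linear model preserves the balancedness
`W₁ W₁ᵀ = W₂ᵀ W₂` if it holds at initialization. -/
theorem gradient_flow_preserves_balancedness {p d : ℕ}
    (W₁ : ℝ → Matrix (Fin p) (Fin d) ℝ) (W₂ : ℝ → Matrix (Fin p) (Fin p) ℝ)
    (G : ℝ → Matrix (Fin p) (Fin d) ℝ)
    (h1 : ∀ (t : ℝ) (i : Fin p) (j : Fin d),
      HasDerivAt (fun s => W₁ s i j) ((-((W₂ t)ᵀ * G t)) i j) t)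
    (h2 : ∀ (t : ℝ) (i j : Fin p),
      HasDerivAt (fun s => W₂ s i j) ((-(G t * (W₁ t)ᵀ)) i j) t)
    (h0 : W₁ 0 * (W₁ 0)ᵀ = (W₂ 0)ᵀ * W₂ 0) :
    ∀ t : ℝ, 0 ≤ t → W₁ t * (W₁ t)ᵀ = (W₂ t)ᵀ * W₂ t := by
  intro t _
  ext i j
  have hW₁ : ∀ s, HasDerivAt (fun u => (W₁ u * (W₁ u)ᵀ) i j)
      ((-((W₂ s)ᵀ * G s) * (W₁ s)ᵀ + W₁ s * (-((W₂ s)ᵀ * G s))ᵀ) i j) s := fun s =>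
    hasDerivAt_matrix_mul_apply (h1 s i) (h1 s j)
  have hW₂ : ∀ s, HasDerivAt (fun u => ((W₂ u)ᵀ * W₂ u) i j)
      ((-((W₂ s)ᵀ * G s) * (W₁ s)ᵀ + W₁ s * (-((W₂ s)ᵀ * G s))ᵀ) i j) s := fun s => by
    rw [balancedness_deriv_eq]
    exact hasDerivAt_matrix_mul_apply (fun k => h2 s k i) (fun k => h2 s k j)
  exact congrFun (eq_of_hasDerivAt_eq hW₁ hW₂ (congrFun₂ h0 i j)) t
end

section
/- Suppose the gradient of a loss with respect to layer weights W₁, W₂ takes the form ∂L/∂W₁ = W₂ᵀG and ∂L/∂W₂ = GW₁ᵀ for some matrix G. Then under gradient flow, d/dt(W₁W₁ᵀ − W₂ᵀW₂) = 0. -/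
open Matrix

/-! Both Gram matrices move at the same rate: with `W₁' = -W₂ᵀG` and `W₂' = -GW₁ᵀ`, the product rule
gives `d/dt (W₁W₁ᵀ) = -(W₂ᵀGW₁ᵀ) - (W₂ᵀGW₁ᵀ)ᵀ = d/dt (W₂ᵀW₂)`. -/

theorem Matrix.hasDerivAt_mul_apply {𝕜 𝔸 l m n : Type*} [NontriviallyNormedField 𝕜]
    [NormedRing 𝔸] [NormedAlgebra 𝕜 𝔸] [Fintype m]
    {A : 𝕜 → Matrix l m 𝔸} {B : 𝕜 → Matrix m n 𝔸} {A' : Matrix l m 𝔸} {B' : Matrix m n 𝔸}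
    {t : 𝕜} (hA : ∀ i j, HasDerivAt (fun s => A s i j) (A' i j) t)
    (hB : ∀ i j, HasDerivAt (fun s => B s i j) (B' i j) t) (i : l) (k : n) :
    HasDerivAt (fun s => (A s * B s) i k) ((A' * B t + A t * B') i k) t := by
  simp only [add_apply, mul_apply, ← Finset.sum_add_distrib]
  exact HasDerivAt.fun_sum fun j _ => (hA i j).mul (hB j k)

section Gram

variable {𝕜 𝔸 m n : Type*} [NontriviallyNormedField 𝕜] [NormedRing 𝔸] [NormedAlgebra 𝕜 𝔸]
  {A : 𝕜 → Matrix m n 𝔸} {A' : Matrix m n 𝔸} {t : 𝕜}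

theorem Matrix.hasDerivAt_mul_transpose_apply [Fintype n]
    (hA : ∀ i j, HasDerivAt (fun s => A s i j) (A' i j) t) (i k : m) :
    HasDerivAt (fun s => (A s * (A s)ᵀ) i k) ((A' * (A t)ᵀ + A t * A'ᵀ) i k) t :=
  hasDerivAt_mul_apply (B := fun s => (A s)ᵀ) hA (fun a b => hA b a) i k

theorem Matrix.hasDerivAt_transpose_mul_apply [Fintype m]
    (hA : ∀ i j, HasDerivAt (fun s => A s i j) (A' i j) t) (i k : n) :
    HasDerivAt (fun s => ((A s)ᵀ * A s) i k) ((A'ᵀ * A t + (A t)ᵀ * A') i k) t :=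
  hasDerivAt_mul_apply (A := fun s => (A s)ᵀ) (fun a b => hA b a) hA i k

end Gram

theorem Matrix.layeredGradient_gram_derivatives_eq {R m n o : Type*} [CommRing R]
    [Fintype m] [Fintype n] [Fintype o]
    (W₁ : Matrix m n R) (W₂ : Matrix o m R) (G : Matrix o n R) :
    -(W₂ᵀ * G) * W₁ᵀ + W₁ * (-(W₂ᵀ * G))ᵀ = (-(G * W₁ᵀ))ᵀ * W₂ + W₂ᵀ * -(G * W₁ᵀ) := by
  simp only [transpose_neg, transpose_mul, transpose_transpose, Matrix.neg_mul, Matrix.mul_neg,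
    Matrix.mul_assoc]
  abel

/-- If the gradients have the layered form `∂L/∂W₁ = W₂ᵀG`, `∂L/∂W₂ = GW₁ᵀ`, then under
gradient flow `d/dt (W₁W₁ᵀ − W₂ᵀW₂) = 0`. -/
theorem gradient_flow_balancedness_invariant_deriv {p d : ℕ}
    (W₁ : ℝ → Matrix (Fin p) (Fin d) ℝ) (W₂ : ℝ → Matrix (Fin p) (Fin p) ℝ)
    (G : ℝ → Matrix (Fin p) (Fin d) ℝ)
    (h1 : ∀ (t : ℝ) (i : Fin p) (j : Fin d),
      HasDerivAt (fun s => W₁ s i j) ((-((W₂ t)ᵀ * G t)) i j) t)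
    (h2 : ∀ (t : ℝ) (i j : Fin p),
      HasDerivAt (fun s => W₂ s i j) ((-(G t * (W₁ t)ᵀ)) i j) t) :
    ∀ (t : ℝ) (i j : Fin p),
      HasDerivAt (fun s => (W₁ s * (W₁ s)ᵀ - (W₂ s)ᵀ * W₂ s) i j) 0 t := by
  intro t i j
  have hGram₁ := hasDerivAt_mul_transpose_apply (h1 t) i j
  have hGram₂ := hasDerivAt_transpose_mul_apply (h2 t) i j
  rw [layeredGradient_gram_derivatives_eq] at hGram₁
  simpa only [Matrix.sub_apply, sub_self] using hGram₁.fun_sub hGram₂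
end

section
/- If W₁ ∈ ℝ^{p×d} and W₂ ∈ ℝ^{p×p} satisfy W₁W₁ᵀ = W₂ᵀW₂, then the nonzero singular values of W₁ equal the nonzero singular values of W₂, and the nonzero singular values of the product W₂W₁ are exactly the squares of the corresponding nonzero singular values of W₁. -/
/-!
If `B A v = μ v` with `μ ≠ 0` and `v ≠ 0`, then `A v` is an eigenvector of `A B` for `μ`; so `W₁ᵀW₁`,
`W₁W₁ᵀ = W₂ᵀW₂` and `W₂W₂ᵀ` share their nonzero eigenvalues. Balancedness also gives
`(W₂W₁)ᵀ(W₂W₁) = W₁ᵀ(W₂ᵀW₂)W₁ = (W₁ᵀW₁)²`, and a positive semidefinite `M` has `μ > 0` as an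
eigenvalue iff `M²` has `μ²`: from `(M - μ)(M + μ) v = 0` with `M + μ` injective (`-μ` cannot be an
eigenvalue of `M`).
-/

namespace Matrix

section MulComm

variable {K m n : Type*} [CommRing K] [NoZeroDivisors K] [Fintype m] [Fintype n]

theorem mulVec_eigenvector_mul_swap {A : Matrix m n K} {B : Matrix n m K} {μ : K} {v : n → K}
    (hμ : μ ≠ 0) (hv : v ≠ 0) (h : (B * A) *ᵥ v = μ • v) :
    A *ᵥ v ≠ 0 ∧ (A * B) *ᵥ (A *ᵥ v) = μ • (A *ᵥ v) := by
  refine ⟨fun h0 ↦ ?_, ?_⟩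
  · have : μ • v = 0 := by rw [← h, ← mulVec_mulVec, h0, mulVec_zero]
    exact (smul_ne_zero hμ hv) this
  · rw [mulVec_mulVec, Matrix.mul_assoc, ← mulVec_mulVec, h, mulVec_smul]

theorem exists_eigenvector_mul_comm (A : Matrix m n K) (B : Matrix n m K) {μ : K} (hμ : μ ≠ 0) :
    (∃ v : n → K, v ≠ 0 ∧ (B * A) *ᵥ v = μ • v) ↔
      ∃ w : m → K, w ≠ 0 ∧ (A * B) *ᵥ w = μ • w := by
  constructor
  · rintro ⟨v, hv, h⟩
    exact ⟨A *ᵥ v, mulVec_eigenvector_mul_swap hμ hv h⟩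
  · rintro ⟨w, hw, h⟩
    exact ⟨B *ᵥ w, mulVec_eigenvector_mul_swap hμ hw h⟩

end MulComm

namespace PosSemidef

variable {K n : Type*} [CommRing K] [NoZeroDivisors K] [PartialOrder K] [PosMulStrictMono K]
  [StarRing K] [StarOrderedRing K] [Fintype n] {M : Matrix n n K} {μ : K}

theorem mulVec_ne_neg_smul (hM : M.PosSemidef) (hμ : 0 < μ) {v : n → K} (hv : v ≠ 0) :
    M *ᵥ v ≠ -μ • v := by
  intro h
  have hnonneg := hM.dotProduct_mulVec_nonneg v
  rw [h, dotProduct_smul, smul_eq_mul, neg_mul, neg_nonneg] at hnonneg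
  exact (mul_pos hμ (dotProduct_star_self_pos_iff.mpr hv)).not_ge hnonneg

theorem exists_eigenvector_iff_mul_self (hM : M.PosSemidef) (hμ : 0 < μ) :
    (∃ v : n → K, v ≠ 0 ∧ M *ᵥ v = μ • v) ↔
      ∃ v : n → K, v ≠ 0 ∧ (M * M) *ᵥ v = μ ^ 2 • v := by
  constructor
  · rintro ⟨v, hv, h⟩
    refine ⟨v, hv, ?_⟩
    rw [← mulVec_mulVec, h, mulVec_smul, h, smul_smul, sq]
  · rintro ⟨v, hv, h⟩
    -- `(M - μ) (M v + μ v) = M² v - μ² v = 0`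
    refine ⟨M *ᵥ v + μ • v, fun h0 ↦ hM.mulVec_ne_neg_smul hμ hv ?_, ?_⟩
    · rw [neg_smul, eq_neg_iff_add_eq_zero, h0]
    · rw [mulVec_add, mulVec_smul, mulVec_mulVec, h, smul_add, smul_smul, ← sq, add_comm]

end PosSemidef

end Matrix

open Matrix

/-- If `W₁W₁ᵀ = W₂ᵀW₂`, the nonzero singular values of `W₁` and `W₂` agree (stated via the
positive eigenvalues `μ` of `W₁ᵀW₁` resp. `W₂W₂ᵀ`), and the nonzero singular values of the
product `W₂W₁` are the squares of those of `W₁` (stated via eigenvalue `μ²` of `(W₂W₁)ᵀ(W₂W₁)`). -/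
theorem balanced_singular_values {p d : ℕ}
    (W₁ : Matrix (Fin p) (Fin d) ℝ) (W₂ : Matrix (Fin p) (Fin p) ℝ)
    (hbal : W₁ * W₁ᵀ = W₂ᵀ * W₂) (μ : ℝ) (hμ : 0 < μ) :
    ((∃ v : Fin d → ℝ, v ≠ 0 ∧ (W₁ᵀ * W₁).mulVec v = μ • v) ↔
      (∃ v : Fin p → ℝ, v ≠ 0 ∧ (W₂ * W₂ᵀ).mulVec v = μ • v)) ∧
    ((∃ v : Fin d → ℝ, v ≠ 0 ∧ (W₁ᵀ * W₁).mulVec v = μ • v) ↔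
      (∃ v : Fin d → ℝ, v ≠ 0 ∧ ((W₂ * W₁)ᵀ * (W₂ * W₁)).mulVec v = (μ ^ 2) • v)) := by
  have hsq : (W₂ * W₁)ᵀ * (W₂ * W₁) = (W₁ᵀ * W₁) * (W₁ᵀ * W₁) := by
    rw [transpose_mul, Matrix.mul_assoc, ← Matrix.mul_assoc W₂ᵀ, ← hbal, Matrix.mul_assoc W₁,
      ← Matrix.mul_assoc]
  have hpsd : (W₁ᵀ * W₁).PosSemidef := by
    simpa only [conjTranspose_eq_transpose_of_trivial] using posSemidef_conjTranspose_mul_self W₁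
  refine ⟨?_, hsq ▸ hpsd.exists_eigenvector_iff_mul_self hμ⟩
  rw [exists_eigenvector_mul_comm W₁ W₁ᵀ hμ.ne', hbal]
  exact (exists_eigenvector_mul_comm W₂ᵀ W₂ hμ.ne').symm
end

section
/- Suppose all features have equal augmentation parameters and all pretraining feature strengths satisfy φ_i ≤ σ, with the downstream-relevant strength φ_{j*} being among the selected (largest) p features but strictly smaller than at least one other selected feature strength, and all downstream strengths φ̂_j equal. Then the weight ratio γ_{j}/γ_{j*} ≥ 1 for all selected j with strict inequality for some j, and consequently Δ < 0, i.e., pre-projection representations have smaller sample complexity indicator. -/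
/-! The map `x ↦ x / (x² + σ²)` is strictly increasing on `[0, σ]`, so every weight `γ i` is at
least `γ jstar`, strictly so for the feature with `φ jstar < φ i`. Each summand of `Δ` is
`φhat² (t - t²)` with `t = (γ i / γ jstar)² ≥ 1`, hence nonpositive, and negative for that
feature. -/

open Set

theorem strictMonoOn_div_sq_add_sq (σ : ℝ) :
    StrictMonoOn (fun x : ℝ => x / (x ^ 2 + σ ^ 2)) (Icc 0 σ) := by
  intro a ⟨ha0, _⟩ b ⟨_, hbσ⟩ hab
  have hb : 0 < b := ha0.trans_lt hab
  have hσ : 0 < σ := hb.trans_le hbσ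
  have hprod : a * b < σ ^ 2 := by nlinarith
  rw [div_lt_div_iff₀ (by positivity) (by positivity)]
  -- `b (a² + σ²) - a (b² + σ²) = (b - a) (σ² - a b)`
  nlinarith [mul_pos (sub_pos.2 hab) (sub_pos.2 hprod)]

theorem strictMonoOn_sqrt_mul_div_sq_add_sq {α : ℝ} (hα : α < 1) (σ : ℝ) :
    StrictMonoOn (fun x : ℝ => √((1 - α) * x / (x ^ 2 + σ ^ 2))) (Icc 0 σ) := by
  intro a ha b hb hab
  have hfa : 0 ≤ a / (a ^ 2 + σ ^ 2) := div_nonneg ha.1 (by positivity)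
  have hf := strictMonoOn_div_sq_add_sq σ ha hb hab
  simp only [mul_div_assoc]
  exact Real.sqrt_lt_sqrt (mul_nonneg (sub_pos.2 hα).le hfa)
    (mul_lt_mul_of_pos_left hf (sub_pos.2 hα))

theorem sq_sub_pow_four_nonpos {r : ℝ} (hr : 1 ≤ r) : r ^ 2 - r ^ 4 ≤ 0 := by
  nlinarith [mul_nonneg (sq_nonneg r) (sub_nonneg.2 (one_le_pow₀ (n := 2) hr))]

theorem sq_sub_pow_four_neg {r : ℝ} (hr : 1 < r) : r ^ 2 - r ^ 4 < 0 := by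
  nlinarith [mul_pos (pow_pos (one_pos.trans hr) 2) (sub_pos.2 (one_lt_pow₀ hr two_ne_zero))]

theorem delta_neg_weak_feature_general {n : ℕ} (φ : Fin n → ℝ) (jstar : Fin n) (α σ φhat : ℝ)
    (hα1 : α < 1)
    (hφpos : ∀ i, 0 < φ i) (hφσ : ∀ i, φ i ≤ σ)
    (hmin : ∀ i, φ jstar ≤ φ i) (hstrict : ∃ i, φ jstar < φ i)
    (hφhat : 0 < φhat) :
    let γ : Fin n → ℝ := fun i => Real.sqrt ((1 - α) * φ i / ((φ i) ^ 2 + σ ^ 2))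
    (∀ i, 1 ≤ γ i / γ jstar) ∧ (∃ i, 1 < γ i / γ jstar) ∧
    ∑ i ∈ Finset.univ.erase jstar,
        φhat ^ 2 * ((γ i) ^ 2 / (γ jstar) ^ 2 - (γ i) ^ 4 / (γ jstar) ^ 4) < 0 := by
  intro γ
  have hmono := strictMonoOn_sqrt_mul_div_sq_add_sq hα1 σ
  have hmem : ∀ i, φ i ∈ Icc 0 σ := fun i => ⟨(hφpos i).le, hφσ i⟩
  have hγstar : 0 < γ jstar := by
    have h0 : (0 : ℝ) ∈ Icc 0 σ := ⟨le_rfl, (hφpos jstar).le.trans (hφσ jstar)⟩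
    simpa [γ] using hmono h0 (hmem jstar) (hφpos jstar)
  have hratio (i) : 1 ≤ γ i / γ jstar :=
    (one_le_div hγstar).2 (hmono.monotoneOn (hmem jstar) (hmem i) (hmin i))
  obtain ⟨w, hw⟩ := hstrict
  have hratio_w : 1 < γ w / γ jstar := (one_lt_div hγstar).2 (hmono (hmem jstar) (hmem w) hw)
  refine ⟨hratio, ⟨w, hratio_w⟩, Finset.sum_neg' (fun i _ => ?_) ⟨w, ?_, ?_⟩⟩
  · rw [← div_pow, ← div_pow]
    exact mul_nonpos_of_nonneg_of_nonpos (sq_nonneg φhat) (sq_sub_pow_four_nonpos (hratio i))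
  · exact Finset.mem_erase.2 ⟨fun h => hw.ne' (congrArg φ h), Finset.mem_univ w⟩
  · rw [← div_pow, ← div_pow]
    exact mul_neg_of_pos_of_neg (pow_pos hφhat 2) (sq_sub_pow_four_neg hratio_w)

/-- Corollary 3.7 case (2): equal augmentation, all pretraining strengths `φ i ≤ σ`, with the
downstream-relevant strength smallest among the selected features (strictly smaller than some),
and equal downstream strengths. Then the weight ratios satisfy `γ jstar ≤ γ i` with some strict
inequality, and `Δ < 0`. -/
theorem delta_neg_weak_feature {n : ℕ} (φ : Fin n → ℝ) (jstar : Fin n) (α σ φhat : ℝ)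
    (hα0 : 0 ≤ α) (hα1 : α < 1) (hσ : 0 < σ)
    (hφpos : ∀ i, 0 < φ i) (hφσ : ∀ i, φ i ≤ σ)
    (hmin : ∀ i, φ jstar ≤ φ i) (hstrict : ∃ i, φ jstar < φ i)
    (hφhat : 0 < φhat) :
    let γ : Fin n → ℝ := fun i => Real.sqrt ((1 - α) * φ i / ((φ i) ^ 2 + σ ^ 2))
    (∀ i, 1 ≤ γ i / γ jstar) ∧ (∃ i, 1 < γ i / γ jstar) ∧
    ∑ i ∈ Finset.univ.erase jstar,
        φhat ^ 2 * ((γ i) ^ 2 / (γ jstar) ^ 2 - (γ i) ^ 4 / (γ jstar) ^ 4) < 0 :=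
  delta_neg_weak_feature_general φ jstar α σ φhat hα1 hφpos hφσ hmin hstrict hφhat
end

section
/- Suppose all features share the same augmentation parameter α ∈ [0,1), there are at least two selected features, and for all i ≠ j*, φ_{j*} > max{φ_i, σ²/φ_i}. Then for each i ≠ j*, γ_i > γ_{j*}, and therefore Δ = Σ_{i ≠ j*} φ̂_i²(γ_i²/γ_{j*}² − γ_i⁴/γ_{j*}⁴) < 0 whenever some φ̂_i > 0. -/
/-! The gain `γ_j = √((1 - α) φ_j / (φ_j² + σ²))` is a monotone image of `φ_j / (φ_j² + σ²)`, and
`a / (a² + c) - b / (b² + c) = (b - a)(ab - c) / ((a² + c)(b² + c))`; the hypothesis on `φ_{j*}` makes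
both factors of the numerator positive, so `γ_{j*} < γ_i`. Each term of `Δ` is then
`φ̂_i² (r - r²)` with `r = γ_i² / γ_{j*}² > 1`, hence nonpositive, and negative when `φ̂_i ≠ 0`. -/

lemma div_sq_add_lt_div_sq_add {a b c : ℝ} (ha : 0 < a) (hc : 0 ≤ c) (hab : a < b)
    (hc_lt : c < a * b) : b / (b ^ 2 + c) < a / (a ^ 2 + c) := by
  have hb : 0 < b := ha.trans hab
  rw [div_lt_div_iff₀ (by positivity) (by positivity)]
  nlinarith [mul_pos (sub_pos.mpr hab) (sub_pos.mpr hc_lt)]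

lemma sqrt_gain_lt_sqrt_gain {a b c α : ℝ} (hα : α < 1) (ha : 0 < a) (hc : 0 ≤ c) (hab : a < b)
    (hc_lt : c < a * b) :
    √((1 - α) * b / (b ^ 2 + c)) < √((1 - α) * a / (a ^ 2 + c)) := by
  have hb : 0 < b := ha.trans hab
  have hα' : 0 < 1 - α := sub_pos.mpr hα
  apply Real.sqrt_lt_sqrt (by positivity)
  simp only [mul_div_assoc]
  exact mul_lt_mul_of_pos_left (div_sq_add_lt_div_sq_add ha hc hab hc_lt) hα'

lemma sq_div_sq_sub_pow_four_div_pow_four_neg {u v : ℝ} (hu : 0 < u) (huv : u < v) :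
    v ^ 2 / u ^ 2 - v ^ 4 / u ^ 4 < 0 := by
  have hr : 1 < v ^ 2 / u ^ 2 := by
    rw [one_lt_div (by positivity)]
    exact pow_lt_pow_left₀ huv hu.le two_ne_zero
  have hr_sq : v ^ 4 / u ^ 4 = (v ^ 2 / u ^ 2) ^ 2 := by rw [div_pow]; ring
  rw [hr_sq]
  nlinarith

theorem delta_neg_strong_feature_general {n : ℕ} (φ φhat : Fin n → ℝ) (jstar : Fin n) (α σ : ℝ)
    (hα1 : α < 1)
    (hφpos : ∀ i, 0 < φ i)
    (hstrong : ∀ i, i ≠ jstar → max (φ i) (σ ^ 2 / φ i) < φ jstar) :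
    let γ : Fin n → ℝ := fun i => Real.sqrt ((1 - α) * φ i / ((φ i) ^ 2 + σ ^ 2))
    (∀ i, i ≠ jstar → γ jstar < γ i) ∧
    ((∃ i, i ≠ jstar ∧ 0 < φhat i) →
      ∑ i ∈ Finset.univ.erase jstar,
          (φhat i) ^ 2 * ((γ i) ^ 2 / (γ jstar) ^ 2 - (γ i) ^ 4 / (γ jstar) ^ 4) < 0) := by
  intro γ
  have hγ_lt : ∀ i, i ≠ jstar → γ jstar < γ i := by
    intro i hi
    obtain ⟨hφ_lt, hσ_lt⟩ := max_lt_iff.mp (hstrong i hi)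
    rw [div_lt_iff₀ (hφpos i)] at hσ_lt
    exact sqrt_gain_lt_sqrt_gain hα1 (hφpos i) (sq_nonneg σ) hφ_lt (by linarith)
  have hγ_pos : 0 < γ jstar := by
    have hα' : 0 < 1 - α := sub_pos.mpr hα1
    have := hφpos jstar
    exact Real.sqrt_pos.mpr (by positivity)
  have hterm_neg : ∀ i ∈ Finset.univ.erase jstar,
      (γ i) ^ 2 / (γ jstar) ^ 2 - (γ i) ^ 4 / (γ jstar) ^ 4 < 0 := fun i hi =>
    sq_div_sq_sub_pow_four_div_pow_four_neg hγ_pos (hγ_lt i (Finset.ne_of_mem_erase hi))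
  refine ⟨hγ_lt, fun ⟨i₀, hi₀, hφhat₀⟩ => ?_⟩
  have hi₀_mem : i₀ ∈ Finset.univ.erase jstar := Finset.mem_erase.mpr ⟨hi₀, Finset.mem_univ _⟩
  refine Finset.sum_neg' (fun i hi => ?_) ⟨i₀, hi₀_mem, ?_⟩
  · exact mul_nonpos_of_nonneg_of_nonpos (sq_nonneg _) (hterm_neg i hi).le
  · exact mul_neg_of_pos_of_neg (by positivity) (hterm_neg i₀ hi₀_mem)

/-- Corollary 3.7 case (3): equal augmentation, at least two selected features, and the
downstream-relevant strength `φ jstar > max{φ i, σ²/φ i}` for all `i ≠ jstar`. Then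
`γ i > γ jstar` for all `i ≠ jstar`, hence `Δ < 0` whenever some `φ̂ i > 0`. -/
theorem delta_neg_strong_feature {n : ℕ} (φ φhat : Fin n → ℝ) (jstar : Fin n) (α σ : ℝ)
    (hα0 : 0 ≤ α) (hα1 : α < 1) (hσ : 0 < σ) (hn : 2 ≤ n)
    (hφpos : ∀ i, 0 < φ i)
    (hstrong : ∀ i, i ≠ jstar → max (φ i) (σ ^ 2 / φ i) < φ jstar)
    (hφhat : ∀ i, 0 ≤ φhat i) :
    let γ : Fin n → ℝ := fun i => Real.sqrt ((1 - α) * φ i / ((φ i) ^ 2 + σ ^ 2))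
    (∀ i, i ≠ jstar → γ jstar < γ i) ∧
    ((∃ i, i ≠ jstar ∧ 0 < φhat i) →
      ∑ i ∈ Finset.univ.erase jstar,
          (φhat i) ^ 2 * ((γ i) ^ 2 / (γ jstar) ^ 2 - (γ i) ^ 4 / (γ jstar) ^ 4) < 0) :=
  delta_neg_strong_feature_general φ φhat jstar α σ hα1 hφpos hstrong
end

section
/- Under the same assumptions (coordinate-wise odd model, coordinate-wise sign-symmetric data distribution), the contrastive loss L(f) = −2E[f(x)ᵀf(x⁺)] + E[(f(x)ᵀf(x⁻))²] decomposes as a sum over coordinates: L(f) = Σ_{i=1}^p ( −2E[f_i(x_i)f_i(x_i⁺)] + E[(f_i(x_i)f_i(x_i⁻))²] ). -/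
/-!
The positive-pair term is linear in the sum over coordinates. Expanding the square of the
negative-pair term gives a double sum whose off-diagonal terms vanish: for `i ≠ j`, flipping the
sign of coordinate `i` of the first sample preserves `μ ⊗ μ` but, `f i` being odd, negates the
`(i, j)` term, so its integral equals its own negative.
-/

open MeasureTheory

theorem MeasureTheory.MeasurePreserving.integral_eq_zero_of_comp_eq_neg {α : Type*}
    [MeasurableSpace α] {μ : Measure α} {T : α → α}
    (hT : MeasurePreserving T μ μ) {g : α → ℝ} (hg : AEStronglyMeasurable g μ)
    (hgT : ∀ x, g (T x) = -g x) : ∫ x, g x ∂μ = 0 := by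
  have h : ∫ x, g x ∂μ = -∫ x, g x ∂μ := by
    calc ∫ x, g x ∂μ = ∫ x, g (T x) ∂μ := by
          rw [← integral_map hT.aemeasurable (hT.map_eq.symm ▸ hg), hT.map_eq]
      _ = -∫ x, g x ∂μ := by simp only [hgT, integral_neg]
  linarith

theorem integral_sq_sum_eq_sum_integral_sq {α ι : Type*} [MeasurableSpace α] {μ : Measure α}
    (s : Finset ι) {φ : ι → α → ℝ}
    (hint : ∀ i j, Integrable (fun x => φ i x * φ j x) μ)
    (horth : ∀ i j, i ≠ j → ∫ x, φ i x * φ j x ∂μ = 0) :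
    ∫ x, (∑ i ∈ s, φ i x) ^ 2 ∂μ = ∑ i ∈ s, ∫ x, φ i x ^ 2 ∂μ := by
  simp_rw [sq, Finset.sum_mul_sum]
  rw [integral_finsetSum _ fun i _ => integrable_finsetSum _ fun j _ => hint i j]
  refine Finset.sum_congr rfl fun i hi => ?_
  rw [integral_finsetSum _ fun j _ => hint i j, Finset.sum_eq_single_of_mem i hi]
  exact fun j _ hji => horth i j hji.symm

section FlipCoord

variable {ι : Type*} [DecidableEq ι]

def flipCoord (i : ι) (x : ι → ℝ) : ι → ℝ :=
  Function.update x i (-x i)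

@[simp]
theorem flipCoord_apply_self (i : ι) (x : ι → ℝ) : flipCoord i x i = -x i :=
  Function.update_self i _ x

@[simp]
theorem flipCoord_apply_of_ne {i j : ι} (h : j ≠ i) (x : ι → ℝ) : flipCoord i x j = x j :=
  Function.update_of_ne h _ x

theorem measurable_flipCoord (i : ι) : Measurable (flipCoord i) := by
  unfold flipCoord; fun_prop

theorem integral_prod_eq_zero_of_comp_flipCoord_fst_eq_neg
    {μ : Measure (ι → ℝ)} [SFinite μ] {i : ι} (hsym : μ.map (flipCoord i) = μ)
    {g : (ι → ℝ) × (ι → ℝ) → ℝ} (hg : AEStronglyMeasurable g (μ.prod μ))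
    (hodd : ∀ x y, g (flipCoord i x, y) = -g (x, y)) :
    ∫ z, g z ∂(μ.prod μ) = 0 :=
  (MeasurePreserving.prod ⟨measurable_flipCoord i, hsym⟩ (.id μ)).integral_eq_zero_of_comp_eq_neg
    hg fun z => hodd z.1 z.2

end FlipCoord

/-- `ν` is the law of positive pairs `(x, x⁺)`; negative pairs are independent draws from the
marginal `μ`. -/
theorem contrastive_loss_coordinate_decomposition_general {p : ℕ}
    (μ : Measure (Fin p → ℝ)) (ν : Measure ((Fin p → ℝ) × (Fin p → ℝ)))
    [IsProbabilityMeasure μ]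
    (f : Fin p → ℝ → ℝ)
    (hodd : ∀ i a, f i (-a) = -f i a)
    (hsym : ∀ i : Fin p,
      Measure.map (fun x => Function.update x i (-(x i))) μ = μ)
    (hIntPos : ∀ i, Integrable
      (fun z : (Fin p → ℝ) × (Fin p → ℝ) => f i (z.1 i) * f i (z.2 i)) ν)
    (hIntNeg : ∀ i j : Fin p, Integrable
      (fun z : (Fin p → ℝ) × (Fin p → ℝ) =>
        f i (z.1 i) * f i (z.2 i) * (f j (z.1 j) * f j (z.2 j))) (μ.prod μ)) :
    (-2) * ∫ z, (∑ i, f i (z.1 i) * f i (z.2 i)) ∂ν +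
        ∫ z, (∑ i, f i (z.1 i) * f i (z.2 i)) ^ 2 ∂(μ.prod μ) =
      ∑ i, ((-2) * ∫ z, f i (z.1 i) * f i (z.2 i) ∂ν +
        ∫ z, (f i (z.1 i) * f i (z.2 i)) ^ 2 ∂(μ.prod μ)) := by
  have hcross : ∀ i j, i ≠ j →
      ∫ z, f i (z.1 i) * f i (z.2 i) * (f j (z.1 j) * f j (z.2 j)) ∂(μ.prod μ) = 0 :=
    fun i j hij => integral_prod_eq_zero_of_comp_flipCoord_fst_eq_neg (hsym i)
      (hIntNeg i j).aestronglyMeasurable fun x y => by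
        simp only [flipCoord_apply_self, flipCoord_apply_of_ne hij.symm, hodd]
        ring
  rw [integral_finsetSum _ fun i _ => hIntPos i,
    integral_sq_sum_eq_sum_integral_sq _ hIntNeg hcross, Finset.mul_sum,
    ← Finset.sum_add_distrib]

/-- Coordinate-wise decomposition of the spectral contrastive loss for a coordinate-wise odd
model over a coordinate-wise sign-symmetric data distribution: `ν` is the distribution of
positive pairs `(x, x⁺)` and negatives are independent draws from the marginal `μ`. -/
theorem contrastive_loss_coordinate_decomposition {p : ℕ}
    (μ : Measure (Fin p → ℝ)) (ν : Measure ((Fin p → ℝ) × (Fin p → ℝ)))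
    [IsProbabilityMeasure μ] [IsProbabilityMeasure ν]
    (f : Fin p → ℝ → ℝ) (hmeas : ∀ i, Measurable (f i))
    (hodd : ∀ i a, f i (-a) = -f i a)
    (hsym : ∀ i : Fin p,
      Measure.map (fun x => Function.update x i (-(x i))) μ = μ)
    (hIntPos : ∀ i, Integrable
      (fun z : (Fin p → ℝ) × (Fin p → ℝ) => f i (z.1 i) * f i (z.2 i)) ν)
    (hIntNeg : ∀ i j : Fin p, Integrable
      (fun z : (Fin p → ℝ) × (Fin p → ℝ) =>
        f i (z.1 i) * f i (z.2 i) * (f j (z.1 j) * f j (z.2 j))) (μ.prod μ)) :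
    (-2) * ∫ z, (∑ i, f i (z.1 i) * f i (z.2 i)) ∂ν +
        ∫ z, (∑ i, f i (z.1 i) * f i (z.2 i)) ^ 2 ∂(μ.prod μ) =
      ∑ i, ((-2) * ∫ z, f i (z.1 i) * f i (z.2 i) ∂ν +
        ∫ z, (f i (z.1 i) * f i (z.2 i)) ^ 2 ∂(μ.prod μ)) :=
  contrastive_loss_coordinate_decomposition_general μ ν f hodd hsym hIntPos hIntNeg
end
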